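/- Let N ≥ 7 be an integer, b₁, b₂ > 0, and let t ∈ (0,1) satisfy γ₁(t) > 0. Define α(t) = −τ(t) + √(τ(t)² + γ₁(t)) and β(t) = γ₁(t) + τ(t)·α(t). Then β(t) > 0, and the pair (λ₀,λ₁) ∈ (0,∞)² determined by λ₁^{(N−2)/2} = √(b₂/(2·b₁·β(t))) and λ₀^{(N−2)/2} = α(t)·λ₁^{(N−2)/2} is the unique point of (0,∞)² at which both partial derivatives ∂f₃/∂λ₀ and ∂f₃/∂λ₁ vanish. -/

import Mathlib

open Real Filter Set

/-- `τ(t) = t^{-(N-2)} − 1`. -/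
noncomputable def tau (N : ℕ) (t : ℝ) : ℝ := t ^ (-((N : ℝ) - 2)) - 1

/-- `γ₁(t) = (1−t²)^{-(N−2)} − 2·(√3·t)^{-(N−2)} + 2·(t⁴+t²+1)^{-(N−2)/2}`. -/
noncomputable def gamma1 (N : ℕ) (t : ℝ) : ℝ :=
  (1 - t ^ 2) ^ (-((N : ℝ) - 2)) - 2 * (Real.sqrt 3 * t) ^ (-((N : ℝ) - 2)) +
    2 * (t ^ 4 + t ^ 2 + 1) ^ (-((N : ℝ) - 2) / 2)

/-- `f₃(λ₀,λ₁,t)`. -/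
noncomputable def f3 (N : ℕ) (b1 b2 : ℝ) (l0 l1 t : ℝ) : ℝ :=
  b1 * (l0 ^ ((N : ℝ) - 2) + 3 * gamma1 N t * l1 ^ ((N : ℝ) - 2) +
    6 * tau N t * l0 ^ (((N : ℝ) - 2) / 2) * l1 ^ (((N : ℝ) - 2) / 2)) -
  b2 * (((N : ℝ) - 2) / 2) * Real.log (l1 ^ 3 * l0)

/-- `α(t) = −τ(t) + √(τ(t)² + γ₁(t))`. -/
noncomputable def alphaF (N : ℕ) (t : ℝ) : ℝ :=
  -tau N t + Real.sqrt ((tau N t) ^ 2 + gamma1 N t)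

/-- `β(t) = γ₁(t) + τ(t)·α(t)`. -/
noncomputable def betaF (N : ℕ) (t : ℝ) : ℝ :=
  gamma1 N t + tau N t * alphaF N t

set_option maxHeartbeats 1000000 in
theorem stmt_1 (N : ℕ) (hN : 7 ≤ N) (b1 b2 : ℝ) (hb1 : 0 < b1) (hb2 : 0 < b2)
    (t : ℝ) (ht : t ∈ Ioo (0 : ℝ) 1) (hg : 0 < gamma1 N t) :
    0 < betaF N t ∧
    ∃ l0 l1 : ℝ, 0 < l0 ∧ 0 < l1 ∧
      l1 ^ (((N : ℝ) - 2) / 2) = Real.sqrt (b2 / (2 * b1 * betaF N t)) ∧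
      l0 ^ (((N : ℝ) - 2) / 2) = alphaF N t * l1 ^ (((N : ℝ) - 2) / 2) ∧
      ∀ m0 m1 : ℝ, 0 < m0 → 0 < m1 →
        ((deriv (fun x => f3 N b1 b2 x m1 t) m0 = 0 ∧
          deriv (fun y => f3 N b1 b2 m0 y t) m1 = 0) ↔ (m0 = l0 ∧ m1 = l1)) := by

  obtain ⟨ht0, ht1⟩ := ht
  have hN' : (7:ℝ) ≤ (N:ℝ) := by exact_mod_cast hN
  set c : ℝ := (N:ℝ) - 2 with hc
  have hcpos : (0:ℝ) < c := by rw [hc]; linarith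
  have hc2 : (0:ℝ) < c / 2 := by linarith
  -- τ > 0
  have hτ : 0 < tau N t := by
    have h1 : 1 < t ^ (-c) := by
      rw [Real.one_lt_rpow_iff_of_pos ht0]
      exact Or.inr ⟨ht1, by linarith⟩
    unfold tau
    rw [← hc]
    linarith
  have hsq : Real.sqrt ((tau N t) ^ 2 + gamma1 N t) ^ 2 = (tau N t) ^ 2 + gamma1 N t :=
    Real.sq_sqrt (by positivity)
  have hα : 0 < alphaF N t := by
    unfold alphaF
    have : tau N t < Real.sqrt ((tau N t) ^ 2 + gamma1 N t) :=
      (Real.lt_sqrt hτ.le).2 (by linarith)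
    linarith
  have hquad : alphaF N t ^ 2 + 2 * tau N t * alphaF N t - gamma1 N t = 0 := by
    unfold alphaF
    have := hsq
    linear_combination this
  have hβ : 0 < betaF N t := by
    unfold betaF
    positivity
  refine ⟨hβ, ?_⟩
  -- abbreviations
  set τ := tau N t with hτd
  set γ := gamma1 N t with hγd
  set α := alphaF N t with hαd
  set β := betaF N t with hβd
  have hβγ : β = γ + τ * α := rfl
  -- the target point
  set y1 : ℝ := Real.sqrt (b2 / (2 * b1 * β)) with hy1
  have hy1pos : 0 < y1 := Real.sqrt_pos.2 (by positivity)
  have hy1sq : y1 ^ 2 = b2 / (2 * b1 * β) := Real.sq_sqrt (by positivity)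
  set l1 : ℝ := y1 ^ (2 / c) with hl1
  set l0 : ℝ := (α * y1) ^ (2 / c) with hl0
  have hl1pos : 0 < l1 := Real.rpow_pos_of_pos hy1pos _
  have hl0pos : 0 < l0 := Real.rpow_pos_of_pos (by positivity) _
  have hinv : ∀ a : ℝ, 0 < a → (a ^ (2 / c)) ^ (c / 2) = a := by
    intro a ha
    rw [← Real.rpow_mul ha.le]
    have : 2 / c * (c / 2) = 1 := by field_simp
    rw [this, Real.rpow_one]
  have hl1c : l1 ^ (c / 2) = y1 := hinv _ hy1pos
  have hl0c : l0 ^ (c / 2) = α * y1 := hinv _ (by positivity)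
  have hαd' : α = -τ + Real.sqrt (τ ^ 2 + γ) := rfl
  clear_value c τ γ α β y1 l1 l0
  refine ⟨l0, l1, hl0pos, hl1pos, by rw [hl1c], by rw [hl0c, hl1c], ?_⟩
  intro m0 m1 hm0 hm1
  set X : ℝ := m0 ^ (c / 2) with hX
  set Y : ℝ := m1 ^ (c / 2) with hY
  have hXpos : 0 < X := Real.rpow_pos_of_pos hm0 _
  have hYpos : 0 < Y := Real.rpow_pos_of_pos hm1 _
  -- rpow identities
  have em0c : m0 ^ c = X ^ 2 := by
    rw [hX, ← Real.rpow_natCast (m0 ^ (c/2)) 2, ← Real.rpow_mul hm0.le]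
    norm_num
  have em1c : m1 ^ c = Y ^ 2 := by
    rw [hY, ← Real.rpow_natCast (m1 ^ (c/2)) 2, ← Real.rpow_mul hm1.le]
    norm_num
  have em0c1 : m0 ^ (c - 1) = X ^ 2 / m0 := by
    rw [Real.rpow_sub hm0, Real.rpow_one, em0c]
  have em1c1 : m1 ^ (c - 1) = Y ^ 2 / m1 := by
    rw [Real.rpow_sub hm1, Real.rpow_one, em1c]
  have em0h : m0 ^ (c / 2 - 1) = X / m0 := by
    rw [Real.rpow_sub hm0, Real.rpow_one, hX]
  have em1h : m1 ^ (c / 2 - 1) = Y / m1 := by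
    rw [Real.rpow_sub hm1, Real.rpow_one, hY]
  clear_value X Y
  -- derivative in the first variable
  have hd0 : HasDerivAt (fun x => f3 N b1 b2 x m1 t)
      ((c / (2 * m0)) * (2 * b1 * (X ^ 2 + 3 * τ * X * Y) - b2)) m0 := by
    have h1 : HasDerivAt (fun x : ℝ => x ^ c) (c * m0 ^ (c - 1)) m0 :=
      Real.hasDerivAt_rpow_const (Or.inl hm0.ne')
    have h2 : HasDerivAt (fun x : ℝ => x ^ (c / 2)) ((c / 2) * m0 ^ (c / 2 - 1)) m0 :=
      Real.hasDerivAt_rpow_const (Or.inl hm0.ne')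
    have hmul : HasDerivAt (fun x : ℝ => m1 ^ 3 * x) (m1 ^ 3) m0 := by
      simpa using (hasDerivAt_id m0).const_mul (m1 ^ 3)
    have h3 := hmul.log (by positivity : m1 ^ 3 * m0 ≠ 0)
    have h4 := (((h1.add_const (3 * γ * m1 ^ c)).add
        ((h2.const_mul (6 * τ)).mul_const (m1 ^ (c / 2)))).const_mul b1).sub
        (h3.const_mul (b2 * (c / 2)))
    have hfun : (fun x => f3 N b1 b2 x m1 t) =
        (fun x : ℝ => b1 * (x ^ c + 3 * γ * m1 ^ c + 6 * τ * x ^ (c / 2) * m1 ^ (c / 2)) -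
          b2 * (c / 2) * Real.log (m1 ^ 3 * x)) := by
      funext x
      simp only [f3]
      rw [← hc, ← hτd, ← hγd]
    rw [hfun]
    refine h4.congr_deriv ?_
    rw [em0c1, em0h, ← hY]
    field_simp
    ring
  -- derivative in the second variable
  have hd1 : HasDerivAt (fun y => f3 N b1 b2 m0 y t)
      ((3 * c / (2 * m1)) * (2 * b1 * (γ * Y ^ 2 + τ * X * Y) - b2)) m1 := by
    have h1 : HasDerivAt (fun y : ℝ => y ^ c) (c * m1 ^ (c - 1)) m1 :=
      Real.hasDerivAt_rpow_const (Or.inl hm1.ne')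
    have h2 : HasDerivAt (fun y : ℝ => y ^ (c / 2)) ((c / 2) * m1 ^ (c / 2 - 1)) m1 :=
      Real.hasDerivAt_rpow_const (Or.inl hm1.ne')
    have hmul : HasDerivAt (fun y : ℝ => y ^ 3 * m0) (3 * m1 ^ 2 * m0) m1 := by
      simpa using (hasDerivAt_pow 3 m1).mul_const m0
    have h3 := hmul.log (by positivity : m1 ^ 3 * m0 ≠ 0)
    have h4 := ((((h1.const_mul (3 * γ)).const_add (m0 ^ c)).add
        (h2.const_mul (6 * τ * m0 ^ (c / 2)))).const_mul b1).sub
        (h3.const_mul (b2 * (c / 2)))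
    have hfun : (fun y => f3 N b1 b2 m0 y t) =
        (fun y : ℝ => b1 * (m0 ^ c + 3 * γ * y ^ c + 6 * τ * m0 ^ (c / 2) * y ^ (c / 2)) -
          b2 * (c / 2) * Real.log (y ^ 3 * m0)) := by
      funext y
      simp only [f3]
      rw [← hc, ← hτd, ← hγd]
    rw [hfun]
    refine h4.congr_deriv ?_
    rw [em1c1, em1h, ← hX]
    field_simp
    ring
  rw [hd0.deriv, hd1.deriv]
  -- critical point equations
  have hbeta : 2 * b1 * β * y1 ^ 2 = b2 := by
    rw [hy1sq]
    field_simp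
  have key : (2 * b1 * (X ^ 2 + 3 * τ * X * Y) = b2 ∧ 2 * b1 * (γ * Y ^ 2 + τ * X * Y) = b2)
      ↔ (X = α * y1 ∧ Y = y1) := by
    constructor
    · rintro ⟨e1, e2⟩
      have h5 : X ^ 2 + 2 * τ * X * Y - γ * Y ^ 2 = 0 := by
        have h5' := mul_left_cancel₀ (by positivity : (2 * b1 : ℝ) ≠ 0) (e1.trans e2.symm)
        linear_combination h5'
      have h6 : (X + τ * Y) ^ 2 = (τ ^ 2 + γ) * Y ^ 2 := by linear_combination h5
      have h7 : X + τ * Y = Real.sqrt (τ ^ 2 + γ) * Y := by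
        calc X + τ * Y = Real.sqrt ((X + τ * Y) ^ 2) := (Real.sqrt_sq (by positivity)).symm
          _ = Real.sqrt ((τ ^ 2 + γ) * Y ^ 2) := by rw [h6]
          _ = Real.sqrt (τ ^ 2 + γ) * Y := by
              rw [Real.sqrt_mul (by positivity), Real.sqrt_sq hYpos.le]
      have hXY : X = α * Y := by
        rw [hαd']
        linarith [h7]
      have hY1 : Y = y1 := by
        rw [hXY] at e2
        have h8 : 2 * b1 * β * Y ^ 2 = b2 := by
          linear_combination e2 + (2 * b1 * Y ^ 2) * hβγ
        have h9 : Y ^ 2 = b2 / (2 * b1 * β) := by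
          rw [eq_div_iff (by positivity : (2 * b1 * β : ℝ) ≠ 0)]
          linear_combination h8
        rw [hy1, ← h9]
        exact (Real.sqrt_sq hYpos.le).symm
      exact ⟨by rw [hXY, hY1], hY1⟩
    · rintro ⟨e1, e2⟩
      refine ⟨?_, ?_⟩
      · rw [e1, e2]
        linear_combination hbeta + (2 * b1 * y1 ^ 2) * hquad - (2 * b1 * y1 ^ 2) * hβγ
      · rw [e1, e2]
        linear_combination hbeta - (2 * b1 * y1 ^ 2) * hβγ
  have t0 : X = α * y1 ↔ m0 = l0 := by
    constructor
    · intro h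
      have h2 : X ^ (2 / c) = (α * y1) ^ (2 / c) := by rw [h]
      rwa [hX, ← Real.rpow_mul hm0.le, show c / 2 * (2 / c) = 1 by field_simp,
        Real.rpow_one, ← hl0] at h2
    · intro h
      rw [hX, h]
      exact hl0c
  have t1 : Y = y1 ↔ m1 = l1 := by
    constructor
    · intro h
      have h2 : Y ^ (2 / c) = y1 ^ (2 / c) := by rw [h]
      rwa [hY, ← Real.rpow_mul hm1.le, show c / 2 * (2 / c) = 1 by field_simp,
        Real.rpow_one, ← hl1] at h2
    · intro h
      rw [hY, h]
      exact hl1c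
  have hne0 : (c / (2 * m0) : ℝ) ≠ 0 := by positivity
  have hne1 : (3 * c / (2 * m1) : ℝ) ≠ 0 := by positivity
  rw [mul_eq_zero, mul_eq_zero, or_iff_right hne0, or_iff_right hne1, sub_eq_zero, sub_eq_zero,
    key, t0, t1]
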